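/- Let f ∈ Lip_{δ_D}(α) with seminorm |f|. Then the Haar coefficients satisfy |⟨f, ψ^λ_{j,k}⟩| ≤ |f| · μ(Q_{j,k})^{α + 1/2} for every j ≥ 0, k ∈ K_j, and λ = 1,…, dim V_{j,k} − 1. -/

import Mathlib

open MeasureTheory Set

/-- A dyadic family with inheritance coefficient `B` on a probability space `(X, μ)`:
nested finite partitions `cubes j` of `X` into measurable sets of positive measure,
`cubes 0 = {univ}`, each cube at level `j+1` strictly contained in a unique cube
(its first ancestor) at level `j`, and `μ(ancestor) ≤ B · μ(child)`. -/
structure DyadicFamily {X : Type*} [MeasurableSpace X] (μ : MeasureTheory.Measure X)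
    (B : ℝ) where
  cubes : ℕ → Set (Set X)
  finiteLevel : ∀ j, (cubes j).Finite
  meas : ∀ j, ∀ Q ∈ cubes j, MeasurableSet Q
  zeroth : cubes 0 = {Set.univ}
  cover : ∀ j, ⋃₀ cubes j = Set.univ
  pdisjoint : ∀ j, (cubes j).PairwiseDisjoint id
  posMeasure : ∀ j, ∀ Q ∈ cubes j, 0 < μ Q
  ancestor : ∀ j, ∀ Q ∈ cubes (j + 1), ∃! P, P ∈ cubes j ∧ Q ⊂ P
  inherit : ∀ j, ∀ Q ∈ cubes (j + 1), ∀ P ∈ cubes j, Q ⊂ P →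
    (μ P).toReal ≤ B * (μ Q).toReal
  prob : μ Set.univ = 1

namespace DyadicFamily

variable {X : Type*} [MeasurableSpace X] {μ : MeasureTheory.Measure X} {B : ℝ}

/-- Membership in the dyadic family: `Q` is a cube of some level. -/
def Mem (D : DyadicFamily μ B) (Q : Set X) : Prop := ∃ j, Q ∈ D.cubes j

/-- The offspring of a cube `Q` of level `j`: the cubes of level `j+1`
strictly contained in `Q` (equivalently, whose first ancestor is `Q`). -/
def offspring (D : DyadicFamily μ B) (j : ℕ) (Q : Set X) : Set (Set X) :=
  {Q' ∈ D.cubes (j + 1) | Q' ⊂ Q}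

/-- The pseudo-ultrametric `δ_D(x,y) = inf {μ(Q) : x, y ∈ Q ∈ D}`. -/
noncomputable def delta (D : DyadicFamily μ B) (x y : X) : ℝ :=
  sInf {r : ℝ | ∃ Q, D.Mem Q ∧ x ∈ Q ∧ y ∈ Q ∧ r = (μ Q).toReal}

/-- The distance between two dyadic cubes via the smallest common dyadic ancestor. -/
noncomputable def cubeDist (D : DyadicFamily μ B) (Q₁ Q₂ : Set X) : ℝ :=
  sInf {r : ℝ | ∃ P, D.Mem P ∧ Q₁ ∪ Q₂ ⊆ P ∧ r = (μ P).toReal}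

/-- Mean value of `f` over `Q`. -/
noncomputable def avg (μ : MeasureTheory.Measure X) (f : X → ℝ) (Q : Set X) : ℝ :=
  ((μ Q).toReal)⁻¹ * ∫ x in Q, f x ∂μ

/-- `f` belongs to `V_{j,Q}`: it vanishes outside `Q` and is constant on each
offspring cube of `Q`. -/
def MemV (D : DyadicFamily μ B) (j : ℕ) (Q : Set X) (f : X → ℝ) : Prop :=
  (∀ Q' ∈ D.offspring j Q, ∃ c : ℝ, ∀ x ∈ Q', f x = c) ∧ ∀ x ∉ Q, f x = 0

end DyadicFamily

/-!
Since `ψ` has mean zero, `⟨f, ψ⟩ = ⟨f - f x₀, ψ⟩` for a point `x₀ ∈ Q`. For `x ∈ Q` the cube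
`Q` contains both `x` and `x₀`, so `|f x - f x₀| ≤ |f| μ(Q)^α`; as `ψ` vanishes off `Q`,
Cauchy–Schwarz gives `‖ψ‖₁ ≤ μ(Q)^{1/2} ‖ψ‖₂ = μ(Q)^{1/2}`.
-/

section

variable {X : Type*} [MeasurableSpace X] {μ : Measure X}

lemma integral_sub_const_mul_eq_integral_mul {f ψ : X → ℝ} (hψ : Integrable ψ μ)
    (hfψ : Integrable (fun x => f x * ψ x) μ) (hψ_zero : ∫ x, ψ x ∂μ = 0) (c : ℝ) :
    ∫ x, (f x - c) * ψ x ∂μ = ∫ x, f x * ψ x ∂μ := by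
  simp only [sub_mul]
  rw [integral_sub hfψ (hψ.const_mul c), integral_const_mul, hψ_zero, mul_zero, sub_zero]

lemma abs_integral_mul_le_mul_integral_abs {g ψ : X → ℝ} {Q : Set X} {K : ℝ}
    (hg : ∀ x ∈ Q, |g x| ≤ K) (hψQ : ∀ x ∉ Q, ψ x = 0) (hψ : Integrable ψ μ) :
    |∫ x, g x * ψ x ∂μ| ≤ K * ∫ x, |ψ x| ∂μ := by
  have hpointwise : ∀ x, |g x * ψ x| ≤ K * |ψ x| := by
    intro x
    by_cases hx : x ∈ Q
    · rw [abs_mul]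
      exact mul_le_mul_of_nonneg_right (hg x hx) (abs_nonneg _)
    · simp [hψQ x hx]
  calc |∫ x, g x * ψ x ∂μ| ≤ ∫ x, |g x * ψ x| ∂μ := abs_integral_le_integral_abs
    _ ≤ ∫ x, K * |ψ x| ∂μ :=
      integral_mono_of_nonneg (Filter.Eventually.of_forall fun _ => abs_nonneg _)
        (hψ.abs.const_mul K) (Filter.Eventually.of_forall hpointwise)
    _ = K * ∫ x, |ψ x| ∂μ := integral_const_mul K _

lemma integral_abs_le_sqrt_measureReal_mul_sqrt [IsFiniteMeasure μ] {Q : Set X} {ψ : X → ℝ}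
    (hQ : MeasurableSet Q) (hψQ : ∀ x ∉ Q, ψ x = 0) (hψ : MemLp ψ 2 μ) :
    ∫ x, |ψ x| ∂μ ≤ √(μ.real Q) * √(∫ x, ψ x ^ 2 ∂μ) := by
  set χ : X → ℝ := Q.indicator fun _ => 1
  have hχ_sq : ∀ x, χ x ^ 2 = χ x := by
    intro x
    by_cases hx : x ∈ Q <;> simp [χ, hx]
  have hχ_abs : ∀ x, χ x * |ψ x| = |ψ x| := by
    intro x
    by_cases hx : x ∈ Q <;> simp [χ, hx, hψQ]
  have hholder := integral_mul_le_Lp_mul_Lq_of_nonneg Real.HolderConjugate.two_two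
    (Filter.Eventually.of_forall fun x => indicator_nonneg (fun _ _ => zero_le_one) x)
    (Filter.Eventually.of_forall fun x => abs_nonneg (ψ x))
    (by simpa using memLp_indicator_const 2 hQ (1 : ℝ) (Or.inr (measure_ne_top μ Q)))
    (by rw [ENNReal.ofReal_ofNat]; exact hψ.abs)
  simpa only [hχ_abs, Real.rpow_two, hχ_sq, sq_abs, χ, integral_indicator_const _ hQ,
    smul_eq_mul, mul_one, ← Real.sqrt_eq_rpow] using hholder

end

namespace DyadicFamily

variable {X : Type*} [MeasurableSpace X] {μ : Measure X} {B : ℝ}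

lemma isProbabilityMeasure (D : DyadicFamily μ B) : IsProbabilityMeasure μ := ⟨D.prob⟩

variable (D : DyadicFamily μ B)

lemma univ_mem : D.Mem univ := ⟨0, by rw [D.zeroth]; rfl⟩

lemma exists_mem_cubes (j : ℕ) (x : X) : ∃ Q ∈ D.cubes j, x ∈ Q :=
  mem_sUnion.mp (D.cover j ▸ mem_univ x)

lemma exists_superset_of_le {i m : ℕ} (him : i ≤ m) {Q : Set X} (hQ : Q ∈ D.cubes m) :
    ∃ P ∈ D.cubes i, Q ⊆ P := by
  induction m, him using Nat.le_induction generalizing Q with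
  | base => exact ⟨Q, hQ, subset_rfl⟩
  | succ m _ ih =>
    obtain ⟨P, ⟨hP, hQP⟩, -⟩ := D.ancestor m Q hQ
    obtain ⟨P', hP', hPP'⟩ := ih hP
    exact ⟨P', hP', hQP.subset.trans hPP'⟩

lemma delta_nonneg (x y : X) : 0 ≤ D.delta x y :=
  Real.sInf_nonneg (by rintro _ ⟨Q, -, -, -, rfl⟩; exact ENNReal.toReal_nonneg)

lemma delta_le {Q : Set X} (hQ : D.Mem Q) {x y : X} (hx : x ∈ Q) (hy : y ∈ Q) :
    D.delta x y ≤ (μ Q).toReal :=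
  csInf_le ⟨0, by rintro _ ⟨Q, -, -, -, rfl⟩; exact ENNReal.toReal_nonneg⟩ ⟨Q, hQ, hx, hy, rfl⟩

/-- Every cube other than `univ` lies inside a single cube of level one, so `univ` is the only
cube containing both `x` and `y`. -/
lemma delta_eq_one {P : Set X} (hP : P ∈ D.cubes 1) {x y : X} (hx : x ∈ P) (hy : y ∉ P) :
    D.delta x y = 1 := by
  refine le_antisymm ?_ ?_
  · simpa [D.prob] using D.delta_le D.univ_mem (mem_univ x) (mem_univ y)
  · refine le_csInf ⟨1, univ, D.univ_mem, trivial, trivial, by simp [D.prob]⟩ ?_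
    rintro _ ⟨R, ⟨m, hR⟩, hxR, hyR, rfl⟩
    rcases m with _ | m
    · rw [D.zeroth, mem_singleton_iff] at hR
      simp [hR, D.prob]
    · obtain ⟨P', hP', hRP'⟩ := D.exists_superset_of_le (by omega : 1 ≤ m + 1) hR
      obtain rfl : P' = P := (D.pdisjoint 1).elim_set hP' hP x (hRP' hxR) hx
      exact absurd (hRP' hyR) hy

lemma exists_delta_eq_one : ∃ x y : X, D.delta x y = 1 := by
  have := D.isProbabilityMeasure
  obtain ⟨x⟩ := nonempty_of_isProbabilityMeasure μ
  obtain ⟨P, hP, hxP⟩ := D.exists_mem_cubes 1 x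
  obtain ⟨P₀, ⟨hP₀, hPP₀⟩, -⟩ := D.ancestor 0 P hP
  rw [D.zeroth, mem_singleton_iff] at hP₀
  obtain ⟨y, -, hy⟩ := exists_of_ssubset (hP₀ ▸ hPP₀)
  exact ⟨x, y, D.delta_eq_one hP hxP hy⟩

lemma nonneg_of_abs_sub_le_mul_delta_rpow {f : X → ℝ} {α L : ℝ}
    (hLip : ∀ x y : X, |f x - f y| ≤ L * D.delta x y ^ α) : 0 ≤ L := by
  obtain ⟨x, y, hxy⟩ := D.exists_delta_eq_one
  simpa [hxy] using (abs_nonneg _).trans (hLip x y)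

lemma offspring_finite (j : ℕ) (Q : Set X) : (D.offspring j Q).Finite :=
  (D.finiteLevel (j + 1)).subset (sep_subset _ _)

lemma exists_mem_offspring {j : ℕ} {Q : Set X} (hQ : Q ∈ D.cubes j) {x : X} (hx : x ∈ Q) :
    ∃ Q' ∈ D.offspring j Q, x ∈ Q' := by
  obtain ⟨Q', hQ', hxQ'⟩ := D.exists_mem_cubes (j + 1) x
  obtain ⟨P, ⟨hP, hQ'P⟩, -⟩ := D.ancestor j Q' hQ'
  obtain rfl : P = Q := (D.pdisjoint j).elim_set hP hQ x (hQ'P.subset hxQ') hx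
  exact ⟨Q', ⟨hQ', hQ'P⟩, hxQ'⟩

variable {D}

lemma MemV.eq_sum_indicator {j : ℕ} {Q : Set X} {ψ : X → ℝ} (hψ : D.MemV j Q ψ)
    (hQ : Q ∈ D.cubes j) : ∃ c : Set X → ℝ,
      ψ = ∑ Q' ∈ (D.offspring_finite j Q).toFinset, Q'.indicator fun _ => c Q' := by
  obtain ⟨hconst, hout⟩ := hψ
  choose! c hc using hconst
  refine ⟨c, funext fun x => ?_⟩
  rw [Finset.sum_apply]
  by_cases hx : x ∈ Q
  · obtain ⟨Q', hQ', hxQ'⟩ := D.exists_mem_offspring hQ hx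
    rw [Finset.sum_eq_single_of_mem Q' ((Finite.mem_toFinset _).mpr hQ'), indicator_of_mem hxQ',
      hc Q' hQ' x hxQ']
    intro Q'' hQ'' hne
    refine indicator_of_notMem (fun hxQ'' => hne ?_) _
    exact (D.pdisjoint (j + 1)).elim_set ((Finite.mem_toFinset _).mp hQ'').1 hQ'.1 x hxQ'' hxQ'
  · rw [hout x hx, Finset.sum_eq_zero]
    intro Q' hQ'
    refine indicator_of_notMem (fun hxQ' => hx ?_) _
    exact ((Finite.mem_toFinset _).mp hQ').2.subset hxQ'

lemma MemV.memLp_top {j : ℕ} {Q : Set X} {ψ : X → ℝ} (hψ : D.MemV j Q ψ)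
    (hQ : Q ∈ D.cubes j) : MemLp ψ ⊤ μ := by
  have := D.isProbabilityMeasure
  obtain ⟨c, rfl⟩ := hψ.eq_sum_indicator hQ
  exact memLp_finsetSum' _ fun Q' hQ' => memLp_indicator_const ⊤
    (D.meas (j + 1) Q' ((Finite.mem_toFinset _).mp hQ').1) _ (Or.inr (measure_ne_top μ Q'))

end DyadicFamily

theorem haar_coeff_le_of_lipschitz_general {X : Type*} [MeasurableSpace X]
    {μ : MeasureTheory.Measure X} {B : ℝ} (D : DyadicFamily μ B)
    (α : ℝ) (hα : 0 < α) (f : X → ℝ) (hf : MeasureTheory.Integrable f μ) (L : ℝ)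
    (hLip : ∀ x y : X, |f x - f y| ≤ L * D.delta x y ^ α)
    (j : ℕ) (Q : Set X) (hQ : Q ∈ D.cubes j) (ψ : X → ℝ)
    (hV : D.MemV j Q ψ)
    (hzero : ∫ x, ψ x ∂μ = 0)
    (hnorm : ∫ x, ψ x * ψ x ∂μ = 1) :
    |∫ x, f x * ψ x ∂μ| ≤ L * (μ Q).toReal ^ (α + 1/2) := by
  have := D.isProbabilityMeasure
  have hψ : MemLp ψ ⊤ μ := hV.memLp_top hQ
  have hψ_int : Integrable ψ μ := hψ.integrable le_top
  have hL : 0 ≤ L := D.nonneg_of_abs_sub_le_mul_delta_rpow hLip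
  obtain ⟨x₀, hx₀⟩ : Q.Nonempty := nonempty_of_measure_ne_zero (D.posMeasure j Q hQ).ne'
  have hosc : ∀ x ∈ Q, |f x - f x₀| ≤ L * (μ Q).toReal ^ α := fun x hx =>
    (hLip x x₀).trans <| mul_le_mul_of_nonneg_left
      (Real.rpow_le_rpow (D.delta_nonneg x x₀) (D.delta_le ⟨j, hQ⟩ hx hx₀) hα.le) hL
  have hL1 : ∫ x, |ψ x| ∂μ ≤ √((μ Q).toReal) := by
    simpa [sq, hnorm, Measure.real] using
      integral_abs_le_sqrt_measureReal_mul_sqrt (D.meas j Q hQ) hV.2 (hψ.mono_exponent le_top)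
  calc |∫ x, f x * ψ x ∂μ|
      = |∫ x, (f x - f x₀) * ψ x ∂μ| := by
        rw [integral_sub_const_mul_eq_integral_mul hψ_int (hf.mul_of_top_left hψ) hzero]
    _ ≤ L * (μ Q).toReal ^ α * ∫ x, |ψ x| ∂μ :=
        abs_integral_mul_le_mul_integral_abs hosc hV.2 hψ_int
    _ ≤ L * (μ Q).toReal ^ α * √((μ Q).toReal) := by gcongr
    _ = L * (μ Q).toReal ^ (α + 1/2) := by
        rw [Real.sqrt_eq_rpow, mul_assoc, ← Real.rpow_add
          (ENNReal.toReal_pos (D.posMeasure j Q hQ).ne' (measure_ne_top μ Q))]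

/-- If `f ∈ Lip_{δ_D}(α)` with seminorm (constant) `L`, then each
Haar coefficient satisfies `|⟨f, ψ⟩| ≤ L · μ(Q)^{α + 1/2}`, where `ψ` is any Haar
function associated with the cube `Q` (supported on `Q`, constant on its offspring,
unit `L²` norm, vanishing integral). -/
theorem haar_coeff_le_of_lipschitz {X : Type*} [MeasurableSpace X]
    {μ : MeasureTheory.Measure X} {B : ℝ} (hB : 2 ≤ B) (D : DyadicFamily μ B)
    (α : ℝ) (hα : 0 < α) (f : X → ℝ) (hf : MeasureTheory.Integrable f μ) (L : ℝ)
    (hLip : ∀ x y : X, |f x - f y| ≤ L * D.delta x y ^ α)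
    (j : ℕ) (Q : Set X) (hQ : Q ∈ D.cubes j) (ψ : X → ℝ)
    (hV : D.MemV j Q ψ)
    (hzero : ∫ x, ψ x ∂μ = 0)
    (hnorm : ∫ x, ψ x * ψ x ∂μ = 1) :
    |∫ x, f x * ψ x ∂μ| ≤ L * (μ Q).toReal ^ (α + 1/2) :=
  haar_coeff_le_of_lipschitz_general D α hα f hf L hLip j Q hQ ψ hV hzero hnorm
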